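/- Let n ≥ 1, k ≥ 0, and let P = [ρ₀,…,ρ_{n−1}] be a k-Rvalid vector of size n with exactly ℓ nonempty entries. Then for all maps g, g' : {0,…,n−1} → {0,…,n−1}, one has P ∪ (P·g)↑ = P ∪ (P·g')↑ if and only if g(j) = g'(j) for every index j with ρ_j ≠ ∅. Consequently, the cardinality of succ(P) = {P ∪ (P·g)↑ : g : {0,…,n−1} → {0,…,n−1}} equals n^ℓ. -/

import Mathlib

open Finset

/-- `Π·h`: the vector whose `q`-th entry is the union of the `Π p` over all `p` with `h p = q`. -/
def dotAct {n : ℕ} (Pi : Fin n → Finset ℕ) (h : Fin n → Fin n) : Fin n → Finset ℕ :=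
  fun q => (Finset.univ.filter (fun p => h p = q)).biUnion Pi

/-- Entrywise union of two vectors of sets. -/
def vUnion {n : ℕ} (Pi Pi' : Fin n → Finset ℕ) : Fin n → Finset ℕ :=
  fun q => Pi q ∪ Pi' q

/-- `r = max (π₀ ∪ … ∪ π_{n−1})`. -/
def vMax {n : ℕ} (Pi : Fin n → Finset ℕ) : ℕ :=
  (Finset.univ.sup Pi).sup id

/-- `Π↑`: add `r = max (π₀ ∪ … ∪ π_{n−1})` to every element of every entry. -/
def vUp {n : ℕ} (Pi : Fin n → Finset ℕ) : Fin n → Finset ℕ :=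
  fun q => (Pi q).image (· + vMax Pi)

/-- A `k`-EXPcomposition of size `n`: pairwise disjoint entries whose union is `{1,…,2^k}`. -/
def IsEXP {n : ℕ} (k : ℕ) (Pi : Fin n → Finset ℕ) : Prop :=
  (∀ p q : Fin n, p ≠ q → Disjoint (Pi p) (Pi q)) ∧
    Finset.univ.sup Pi = Finset.Icc 1 (2 ^ k)

/-- A `k`-Rvalid vector of size `n`. -/
def IsRvalid {n : ℕ} (k : ℕ) (ρ : Fin n → Finset ℕ) : Prop :=
  IsEXP k ρ ∧ (∀ p : Fin n, p.val = 0 → 1 ∈ ρ p) ∧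
    ∀ k' < k, ∀ i ∈ Finset.Icc 1 (2 ^ k'), ∀ j ∈ Finset.Icc 1 (2 ^ k'),
      (∃ α, i ∈ ρ α ∧ j ∈ ρ α) → ∃ β, i + 2 ^ k' ∈ ρ β ∧ j + 2 ^ k' ∈ ρ β

/-- A `k`-Lvalid vector of size `m`. -/
def IsLvalid {m : ℕ} (k : ℕ) (lam : Fin m → Finset ℕ) : Prop :=
  IsEXP k lam ∧ (∀ p : Fin m, p.val = 0 → 2 ^ k ∈ lam p) ∧
    ∀ k' < k, ∀ i ∈ Finset.Icc 1 (2 ^ k'), ∀ j ∈ Finset.Icc 1 (2 ^ k'),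
      (∃ α, 2 ^ k + 1 - i ∈ lam α ∧ 2 ^ k + 1 - j ∈ lam α) →
        ∃ β, 2 ^ k + 1 - (i + 2 ^ k') ∈ lam β ∧ 2 ^ k + 1 - (j + 2 ^ k') ∈ lam β

/-- Number of nonempty entries of a vector of sets. -/
def nne {n : ℕ} (Pi : Fin n → Finset ℕ) : ℕ :=
  (Finset.univ.filter (fun q => Pi q ≠ ∅)).card

/-- `succ(P) = {P ∪ (P·g)↑ : g}`. -/
def succSet {n : ℕ} (P : Fin n → Finset ℕ) : Finset (Fin n → Finset ℕ) :=
  (Finset.univ : Finset (Fin n → Fin n)).image (fun g => vUnion P (vUp (dotAct P g)))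

/-- The graded set `U_{m,n}^{(k)}` of U-pairs. -/
def Uset (m n : ℕ) : ℕ → Set ((Fin m → Finset ℕ) × (Fin n → Finset ℕ))
  | 0 => {x | x = (fun p => if p.val = 0 then {1} else ∅,
                   fun q => if q.val = 0 then {1} else ∅)}
  | k + 1 => {x | ∃ L P, (L, P) ∈ Uset m n k ∧ ∃ (f : Fin m → Fin m) (g : Fin n → Fin n),
      x = (vUnion (dotAct L f) (vUp L), vUnion P (vUp (dotAct P g)))}

/-- The `r`-Stirling number: partitions of `{1,…,a}` into `b` nonempty blocks
with `1,…,r` in pairwise distinct blocks. -/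
noncomputable def rStirling (a b r : ℕ) : ℕ :=
  Set.ncard {C : Finset (Finset ℕ) |
    C.card = b ∧ (∅ ∉ C) ∧
    (∀ B ∈ C, ∀ B' ∈ C, B ≠ B' → Disjoint B B') ∧
    C.sup id = Finset.Icc 1 a ∧
    ∀ x ∈ Finset.Icc 1 r, ∀ y ∈ Finset.Icc 1 r, x ≠ y →
      ∀ B ∈ C, x ∈ B → y ∉ B}

/-- The Stirling number of the second kind: the number of partitions of an
`a`-element set into `b` nonempty blocks. -/
noncomputable def stirling2 (a b : ℕ) : ℕ := rStirling a b 0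

/-- The entry `s_n^{(i,j)}` (with `1 ≤ i,j ≤ n`). -/
noncomputable def sEntry (n i j : ℕ) : ℕ :=
  if i ≤ j then
    (j - i).factorial * Nat.choose (n - i) (j - i) *
      ∑ α ∈ Finset.Icc (j - i) i, Nat.choose i α * i ^ (i - α) * stirling2 α (j - i)
  else 0

/-- The matrix `S_n`, with rows and columns indexed by `{1,…,n}`. -/
noncomputable def Smat (n : ℕ) : Matrix (Fin n) (Fin n) ℕ :=
  fun i j => sEntry n (i.val + 1) (j.val + 1)

/-- One step of the shuffle-automaton action on subsets of the grid. -/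
def stepE {m n : ℕ} (E : Finset (Fin m × Fin n)) (f : Fin m → Fin m) (g : Fin n → Fin n) :
    Finset (Fin m × Fin n) :=
  E.image (fun p => (f p.1, p.2)) ∪ E.image (fun p => (p.1, g p.2))

/-- Reachability from `{(0,0)}` by finitely many steps. -/
def Reach {m n : ℕ} (hm : 0 < m) (hn : 0 < n) (E : Finset (Fin m × Fin n)) : Prop :=
  Relation.ReflTransGen (fun E1 E2 => ∃ f g, E2 = stepE E1 f g)
    {(⟨0, hm⟩, ⟨0, hn⟩)} E

/-- Reachability from `{(0,0)}` in at most `t` steps. -/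
def ReachIn {m n : ℕ} (hm : 0 < m) (hn : 0 < n) :
    ℕ → Finset (Fin m × Fin n) → Prop
  | 0, E => E = {(⟨0, hm⟩, ⟨0, hn⟩)}
  | t + 1, E => ReachIn hm hn t E ∨
      ∃ E' f g, ReachIn hm hn t E' ∧ E = stepE E' f g

/-- `s(Λ,P) = {(i,j) : λ_i ∩ ρ_j ≠ ∅}`. -/
def sTab {m n : ℕ} (L : Fin m → Finset ℕ) (P : Fin n → Finset ℕ) :
    Finset (Fin m × Fin n) :=
  Finset.univ.filter (fun p => (L p.1 ∩ P p.2).Nonempty)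

/-!
An element `x` of `ρ_j` reappears in `P ∪ (P·g)↑` as `x + r`, and since the entries of `P·g`
have the same elements as those of `P` but shifted beyond `r`, it does so exactly in the entry
`g j` (the entries of `P` being disjoint). Hence the vector determines `g` on the indices of
nonempty entries, while values of `g` at empty entries do not matter. So `succ(P)` is in bijection
with the maps from the `ℓ` nonempty indices to `Fin n`.
-/

open Function

section VectorOperations

variable {n : ℕ} {P : Fin n → Finset ℕ} {g g' : Fin n → Fin n} {q j : Fin n} {x : ℕ}

theorem mem_dotAct : x ∈ dotAct P g q ↔ ∃ p, g p = q ∧ x ∈ P p := by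
  simp [dotAct]

theorem sup_dotAct (P : Fin n → Finset ℕ) (g : Fin n → Fin n) :
    univ.sup (dotAct P g) = univ.sup P := by
  ext x
  simp only [mem_sup, mem_univ, true_and, mem_dotAct]
  exact ⟨fun ⟨_, p, _, hx⟩ => ⟨p, hx⟩, fun ⟨p, hx⟩ => ⟨g p, p, rfl, hx⟩⟩

theorem vMax_dotAct (P : Fin n → Finset ℕ) (g : Fin n → Fin n) :
    vMax (dotAct P g) = vMax P := by
  rw [vMax, vMax, sup_dotAct]

theorem le_vMax (hx : x ∈ P q) : x ≤ vMax P :=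
  le_sup (f := id) (mem_sup.2 ⟨q, mem_univ q, hx⟩)

theorem mem_dotAct_iff_of_mem (hP : Pairwise (Disjoint on P)) (hx : x ∈ P j) :
    x ∈ dotAct P g q ↔ g j = q := by
  rw [mem_dotAct]
  refine ⟨fun ⟨p, hpq, hxp⟩ => ?_, fun h => ⟨j, h, hx⟩⟩
  obtain rfl : p = j := by_contra fun hpj => disjoint_left.1 (hP hpj) hxp hx
  exact hpq

theorem dotAct_congr (h : ∀ j, P j ≠ ∅ → g j = g' j) : dotAct P g = dotAct P g' := by
  ext q x
  simp only [mem_dotAct]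
  refine exists_congr fun p => and_congr_left fun hx => ?_
  rw [h p (ne_empty_of_mem hx)]

/-- `P·g` has the same elements as `P`, so `(P·g)↑` shifts them past every element of `P`. -/
theorem add_vMax_mem_vUnion_vUp_dotAct_iff (hx : 0 < x) :
    x + vMax P ∈ vUnion P (vUp (dotAct P g)) q ↔ x ∈ dotAct P g q := by
  have hxP : x + vMax P ∉ P q := fun h => by have := le_vMax h; omega
  simp [vUnion, vUp, vMax_dotAct, hxP]

theorem vUnion_vUp_dotAct_eq_iff (hP : Pairwise (Disjoint on P)) (h0 : ∀ q, 0 ∉ P q) :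
    vUnion P (vUp (dotAct P g)) = vUnion P (vUp (dotAct P g')) ↔
      ∀ j, P j ≠ ∅ → g j = g' j := by
  refine ⟨fun h j hj => ?_, fun h => by rw [dotAct_congr h]⟩
  obtain ⟨x, hx⟩ := nonempty_iff_ne_empty.2 hj
  have hxpos : 0 < x := Nat.pos_of_ne_zero fun hx0 => h0 j (hx0 ▸ hx)
  have hfiber : ∀ q, g j = q ↔ g' j = q := fun q => by
    rw [← mem_dotAct_iff_of_mem hP hx, ← mem_dotAct_iff_of_mem hP hx,
      ← add_vMax_mem_vUnion_vUp_dotAct_iff hxpos, ← add_vMax_mem_vUnion_vUp_dotAct_iff hxpos, h]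
  exact ((hfiber (g j)).1 rfl).symm

end VectorOperations

theorem IsEXP.zero_notMem {n k : ℕ} {P : Fin n → Finset ℕ} (hP : IsEXP k P) (q : Fin n) :
    0 ∉ P q := fun h0 => by
  have := hP.2 ▸ mem_sup.2 ⟨q, mem_univ q, h0⟩
  simp at this

/-- Extending maps `s → α` by a fixed `g₀` parametrizes the image of `F` bijectively. -/
theorem card_image_univ_eq_pow_of_eq_iff {ι α β : Type*} [Fintype ι] [DecidableEq ι]
    [Fintype α] [DecidableEq β] [Nonempty (ι → α)] (s : Finset ι) (F : (ι → α) → β)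
    (hF : ∀ g g', F g = F g' ↔ ∀ j ∈ s, g j = g' j) :
    (univ.image F).card = Fintype.card α ^ s.card := by
  obtain ⟨g₀⟩ := ‹Nonempty (ι → α)›
  let extend : (s → α) → (ι → α) := fun h j => if hj : j ∈ s then h ⟨j, hj⟩ else g₀ j
  have himage : univ.image F = univ.image (F ∘ extend) := by
    ext b
    simp only [mem_image, mem_univ, true_and, comp_def]
    refine ⟨?_, fun ⟨h, hb⟩ => ⟨_, hb⟩⟩
    rintro ⟨g, rfl⟩
    exact ⟨fun j => g j, (hF _ _).2 fun j hj => by simp [extend, hj]⟩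
  have hinj : Injective (F ∘ extend) := fun h h' he => by
    funext j
    simpa [extend, j.2] using (hF _ _).1 he j j.2
  rw [himage, card_image_of_injective _ hinj, card_univ, Fintype.card_fun,
    Fintype.card_coe]

theorem stmt6_general (n k ℓ : ℕ) (P : Fin n → Finset ℕ)
    (hP : IsRvalid k P) (hc : nne P = ℓ) :
    (∀ g g' : Fin n → Fin n,
        vUnion P (vUp (dotAct P g)) = vUnion P (vUp (dotAct P g')) ↔
          ∀ j : Fin n, P j ≠ ∅ → g j = g' j) ∧
      (succSet P).card = n ^ ℓ := by
  have hiff : ∀ g g' : Fin n → Fin n,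
      vUnion P (vUp (dotAct P g)) = vUnion P (vUp (dotAct P g')) ↔
        ∀ j : Fin n, P j ≠ ∅ → g j = g' j := fun _ _ =>
    vUnion_vUp_dotAct_eq_iff (fun p q => hP.1.1 p q) hP.1.zero_notMem
  refine ⟨hiff, ?_⟩
  have : Nonempty (Fin n → Fin n) := ⟨id⟩
  have hcard := card_image_univ_eq_pow_of_eq_iff (univ.filter fun j => P j ≠ ∅)
    (fun g => vUnion P (vUp (dotAct P g))) fun g g' => by
      simpa only [mem_filter, mem_univ, true_and] using hiff g g'
  rw [← hc, nne, succSet, hcard, Fintype.card_fin]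

theorem stmt6 (n k ℓ : ℕ) (hn : 1 ≤ n) (P : Fin n → Finset ℕ)
    (hP : IsRvalid k P) (hc : nne P = ℓ) :
    (∀ g g' : Fin n → Fin n,
        vUnion P (vUp (dotAct P g)) = vUnion P (vUp (dotAct P g')) ↔
          ∀ j : Fin n, P j ≠ ∅ → g j = g' j) ∧
      (succSet P).card = n ^ ℓ :=
  stmt6_general n k ℓ P hP hc
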